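/- arXiv:1906.08608 — 3 statements merged into one kernel-verified Lean document; each statement's English description precedes it below -/
import Mathlib

section
/- For a symmetric positive definite 2×2 real matrix H, the complex Beltrami coefficient μ = (H₁₁ - H₂₂ + 2i·H₁₂)/(H₁₁ + H₂₂ + 2√(det H)) satisfies |μ|² ≤ 1 - 4·det H/(tr H)². -/
open Matrix

/-! The numerator of `μ` has squared modulus `(H₁₁ - H₂₂)² + 4H₁₂² = (tr H)² - 4 det H`, the
discriminant of the characteristic polynomial, and the denominator `tr H + 2√(det H)` is at
least `tr H > 0`. -/

theorem Complex.sq_norm_add_two_mul_I_mul_div_ofReal (x y d : ℝ) :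
    ‖((x : ℂ) + 2 * I * y) / d‖ ^ 2 = (x ^ 2 + 4 * y ^ 2) / d ^ 2 := by
  have hnum : (x : ℂ) + 2 * I * y = x + ((2 * y : ℝ) : ℂ) * I := by push_cast; ring
  rw [hnum, norm_div, div_pow, Complex.sq_norm, normSq_add_mul_I, norm_real, Real.norm_eq_abs, sq_abs]
  ring

theorem Matrix.IsSymm.trace_sq_sub_four_mul_det {R : Type*} [CommRing R]
    {A : Matrix (Fin 2) (Fin 2) R} (hA : A.IsSymm) :
    A.trace ^ 2 - 4 * A.det = (A 0 0 - A 1 1) ^ 2 + 4 * A 0 1 ^ 2 := by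
  rw [trace_fin_two, det_fin_two, hA.apply 0 1]
  ring

theorem stmt0_general (H : Matrix (Fin 2) (Fin 2) ℝ) (hpos : H.PosDef)
    (μ : ℂ)
    (hμ : μ = (((H 0 0 - H 1 1 : ℝ) : ℂ) + 2 * Complex.I * ((H 0 1 : ℝ) : ℂ)) /
      (((H 0 0 + H 1 1 + 2 * Real.sqrt H.det : ℝ) : ℂ))) :
    ‖μ‖ ^ 2 ≤ 1 - 4 * H.det / H.trace ^ 2 := by
  have hsymm : H.IsSymm := isHermitian_iff_isSymm.mp hpos.isHermitian
  have htr : 0 < H.trace := hpos.trace_pos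
  have hdisc : 0 ≤ H.trace ^ 2 - 4 * H.det := by
    rw [hsymm.trace_sq_sub_four_mul_det]
    positivity
  rw [hμ, Complex.sq_norm_add_two_mul_I_mul_div_ofReal, ← hsymm.trace_sq_sub_four_mul_det,
    ← trace_fin_two]
  calc (H.trace ^ 2 - 4 * H.det) / (H.trace + 2 * √H.det) ^ 2
      ≤ (H.trace ^ 2 - 4 * H.det) / H.trace ^ 2 := by
        gcongr
        exact le_add_of_nonneg_right (by positivity)
    _ = 1 - 4 * H.det / H.trace ^ 2 := by field_simp

/-- For a symmetric positive definite 2×2 real matrix `H`, the Beltrami coefficient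
`μ = (H₁₁ - H₂₂ + 2i H₁₂)/(H₁₁ + H₂₂ + 2√(det H))` satisfies
`|μ|² ≤ 1 - 4 det H / (tr H)²`. -/
theorem stmt0 (H : Matrix (Fin 2) (Fin 2) ℝ) (hsymm : H.IsSymm) (hpos : H.PosDef)
    (μ : ℂ)
    (hμ : μ = (((H 0 0 - H 1 1 : ℝ) : ℂ) + 2 * Complex.I * ((H 0 1 : ℝ) : ℂ)) /
      (((H 0 0 + H 1 1 + 2 * Real.sqrt H.det : ℝ) : ℂ))) :
    ‖μ‖ ^ 2 ≤ 1 - 4 * H.det / H.trace ^ 2 :=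
  stmt0_general H hpos μ hμ
end

section
/- Let G₀ be a symmetric positive definite n×n matrix. Then there exist r > 0, unit vectors ξ₁,…,ξ_{n*} in ℝⁿ with n* = n(n+1)/2, and linear maps L_i from the space of symmetric n×n matrices to ℝ, such that G = Σᵢ L_i(G) ξᵢ⊗ξᵢ for every symmetric matrix G, and L_i(G) ≥ r for every i whenever |G - G₀| ≤ r. -/
/-!
Off the diagonal, the coefficient of `(e_j + e_k) ⊗ (e_j + e_k)` in a symmetric matrix `H` must
be `H j k`; each such term also puts `H j k` on the diagonal entries `(j, j)` and `(k, k)`, so the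
coefficient of `e_j ⊗ e_j` is `H j j` minus the off-diagonal part of row `j`. This expands every
symmetric matrix along the `n(n+1)/2` vectors `e_j + e_k` (`j ≤ k`, with `e_j + e_j` read as
`e_j`), and at the reference matrix `R = (n + 1) I + J` (`J` the all-ones matrix) all coefficients
are positive (`3` on the diagonal, `1` off it). A positive definite `G₀` is congruent to `R`,
`G₀ = A R Aᵀ`, so the vectors `A (e_j + e_k)` expand every symmetric matrix with coefficients
positive at `G₀`. Normalizing the vectors multiplies the coefficients by positive constants, and
the coefficients, being linear, stay bounded below on a small entrywise neighbourhood of `G₀`.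
-/

open Matrix Finset Filter Topology

theorem exists_pos_forall_le_of_continuousAt {X κ : Type*} [PseudoMetricSpace X] [Finite κ]
    {f : κ → X → ℝ} {x₀ : X} (hf : ∀ k, ContinuousAt (f k) x₀) (hpos : ∀ k, 0 < f k x₀) :
    ∃ r > 0, ∀ x, dist x x₀ ≤ r → ∀ k, r ≤ f k x := by
  obtain ⟨c, hc, hc0⟩ : ∃ c, (∀ k, c < f k x₀) ∧ 0 < c :=
    (((eventually_all.2 fun k => eventually_lt_nhds (hpos k)).filter_mono
      (nhdsWithin_le_nhds (s := Set.Ioi 0))).and self_mem_nhdsWithin).exists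
  obtain ⟨ε, hε, hball⟩ := Metric.eventually_nhds_iff.1
    (eventually_all.2 fun k => continuousAt_const.eventually_lt (hf k) (hc k))
  refine ⟨min c (ε / 2), by positivity, fun x hx k => (min_le_left _ _).trans (hball ?_ k).le⟩
  exact hx.trans_lt ((min_le_right _ _).trans_lt (half_lt_self hε))

namespace Matrix

section Norm

attribute [local instance] Matrix.normedAddCommGroup Matrix.normedSpace

theorem exists_pos_forall_le_of_abs_sub_le {m n κ : Type*} [Fintype m] [Fintype n] [Finite κ]
    (L : κ → Matrix m n ℝ →ₗ[ℝ] ℝ) {G₀ : Matrix m n ℝ} (hpos : ∀ k, 0 < L k G₀) :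
    ∃ r > 0, ∀ G : Matrix m n ℝ, (∀ i j, |G i j - G₀ i j| ≤ r) → ∀ k, r ≤ L k G := by
  obtain ⟨r, hr, hL⟩ := exists_pos_forall_le_of_continuousAt
    (fun k => (LinearMap.continuous_of_finiteDimensional (L k)).continuousAt) hpos
  refine ⟨r, hr, fun G hG => hL G ?_⟩
  rw [dist_eq_norm, norm_le_iff hr.le]
  simpa using hG

end Norm

variable {ι : Type*} [Fintype ι]

theorem dotProduct_self_pos {v : ι → ℝ} (hv : v ≠ 0) : 0 < v ⬝ᵥ v := by
  simpa using dotProduct_star_self_pos_iff.2 hv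

theorem dotProduct_inv_sqrt_smul_self {v : ι → ℝ} (hv : v ≠ 0) :
    ((√(v ⬝ᵥ v))⁻¹ • v) ⬝ᵥ ((√(v ⬝ᵥ v))⁻¹ • v) = 1 := by
  have hpos := dotProduct_self_pos hv
  rw [smul_dotProduct, dotProduct_smul, smul_eq_mul, smul_eq_mul, ← mul_assoc, ← mul_inv,
    Real.mul_self_sqrt hpos.le, inv_mul_cancel₀ hpos.ne']

variable [DecidableEq ι]

open scoped MatrixOrder in
theorem PosDef.exists_isUnit_mul_transpose_self {M : Matrix ι ι ℝ} (hM : M.PosDef) :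
    ∃ B : Matrix ι ι ℝ, IsUnit B ∧ B * Bᵀ = M := by
  refine ⟨CFC.sqrt M, (CFC.isUnit_sqrt_iff M hM.posSemidef.nonneg).2 hM.isUnit, ?_⟩
  rw [← conjTranspose_eq_transpose_of_trivial, ← star_eq_conjTranspose,
    (CFC.sqrt_nonneg M).isSelfAdjoint.star_eq, CFC.sqrt_mul_sqrt_self M hM.posSemidef.nonneg]

theorem PosDef.exists_isUnit_mul_mul_transpose_eq {M N : Matrix ι ι ℝ}
    (hM : M.PosDef) (hN : N.PosDef) : ∃ A : Matrix ι ι ℝ, IsUnit A ∧ A * N * Aᵀ = M := by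
  obtain ⟨B, hB, rfl⟩ := hM.exists_isUnit_mul_transpose_self
  obtain ⟨C, hC, rfl⟩ := hN.exists_isUnit_mul_transpose_self
  have hC' : IsUnit C.det := (isUnit_iff_isUnit_det C).1 hC
  refine ⟨B * C⁻¹, hB.mul (isUnit_nonsing_inv_iff.2 hC), ?_⟩
  rw [transpose_mul, transpose_nonsing_inv]
  simp only [Matrix.mul_assoc]
  rw [nonsing_inv_mul_cancel_left _ _ hC',
    mul_nonsing_inv_cancel_left _ _ ((isUnit_det_transpose C) hC')]

end Matrix

noncomputable section

namespace NashDecomposition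

section RankOneExpansion

variable {ι κ : Type*} [Fintype κ]

def IsRankOneExpansion (L : κ → Matrix ι ι ℝ →ₗ[ℝ] ℝ) (v : κ → ι → ℝ) : Prop :=
  ∀ G : Matrix ι ι ℝ, G.IsSymm → G = ∑ k, L k G • vecMulVec (v k) (v k)

namespace IsRankOneExpansion

variable {L : κ → Matrix ι ι ℝ →ₗ[ℝ] ℝ} {v : κ → ι → ℝ}

theorem comp_equiv {κ' : Type*} [Fintype κ'] (h : IsRankOneExpansion L v) (e : κ' ≃ κ) :
    IsRankOneExpansion (L ∘ e) (v ∘ e) :=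
  fun G hG => (h G hG).trans (e.sum_comp _).symm

theorem rescale (h : IsRankOneExpansion L v) {c : κ → ℝ} (hc : ∀ k, c k ≠ 0) :
    IsRankOneExpansion (fun k => c k ^ 2 • L k) (fun k => (c k)⁻¹ • v k) := by
  intro G hG
  convert h G hG using 2 with k
  rw [smul_vecMulVec, vecMulVec_smul, smul_smul, LinearMap.smul_apply, smul_smul, smul_eq_mul]
  congr 1
  field_simp [hc k]

theorem congruence [Fintype ι] [DecidableEq ι] (h : IsRankOneExpansion L v) {A : Matrix ι ι ℝ}
    (hA : IsUnit A) :
    IsRankOneExpansion (fun k => L k ∘ₗ LinearMap.mulLeftRight ℝ (A⁻¹, A⁻¹ᵀ))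
      (fun k => A *ᵥ v k) := by
  intro G hG
  have hA' : IsUnit A.det := (isUnit_iff_isUnit_det A).1 hA
  have hsymm : (A⁻¹ * G * A⁻¹ᵀ).IsSymm := by
    rw [IsSymm, transpose_mul, transpose_mul, transpose_transpose, hG.eq, Matrix.mul_assoc]
  calc G = A * (A⁻¹ * G * A⁻¹ᵀ) * Aᵀ := by
        rw [transpose_nonsing_inv, Matrix.mul_assoc, Matrix.mul_assoc,
          nonsing_inv_mul _ ((isUnit_det_transpose A) hA'), Matrix.mul_one,
          mul_nonsing_inv_cancel_left _ _ hA']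
    _ = A * (∑ k, L k (A⁻¹ * G * A⁻¹ᵀ) • vecMulVec (v k) (v k)) * Aᵀ := by rw [← h _ hsymm]
    _ = _ := by
        simp [Matrix.mul_sum, Matrix.sum_mul, mul_vecMulVec, vecMulVec_mul, vecMul_transpose]

end IsRankOneExpansion

end RankOneExpansion

section Pairs

variable {ι : Type*}

/-- Symmetrized so that `pairCoeff` is well defined on unordered pairs and linear on all
matrices. -/
def symEntry (j k : ι) : Matrix ι ι ℝ →ₗ[ℝ] ℝ :=
  (2⁻¹ : ℝ) • (entryLinearMap ℝ ℝ j k + entryLinearMap ℝ ℝ k j)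

theorem symEntry_comm (j k : ι) : symEntry j k = symEntry (ι := ι) k j := by
  rw [symEntry, symEntry, add_comm]

@[simp]
theorem symEntry_apply (j k : ι) (H : Matrix ι ι ℝ) : symEntry j k H = (H j k + H k j) / 2 := by
  simp [symEntry, div_eq_inv_mul, mul_add]

variable [DecidableEq ι]

def pairVec (z : Sym2 ι) : ι → ℝ := fun a => if a ∈ z then 1 else 0

theorem pairVec_ne_zero (z : Sym2 ι) : pairVec z ≠ 0 := by
  induction z using Sym2.ind with
  | h j k => exact fun h => by simpa [pairVec] using congr_fun h j

variable [Fintype ι]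

def pairCoeff : Sym2 ι → Matrix ι ι ℝ →ₗ[ℝ] ℝ :=
  Sym2.lift ⟨fun j k => symEntry j k + if j = k then symEntry j j - ∑ m, symEntry j m else 0,
    fun j k => by
      rcases eq_or_ne j k with rfl | hjk
      · rfl
      · simp only [if_neg hjk, if_neg hjk.symm, symEntry_comm j k]⟩

theorem pairCoeff_mk_apply (j k : ι) (H : Matrix ι ι ℝ) :
    pairCoeff s(j, k) H =
      symEntry j k H + if j = k then symEntry j j H - ∑ m, symEntry j m H else 0 := by
  simp only [pairCoeff, Sym2.lift_mk, LinearMap.add_apply]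
  split_ifs <;> simp

theorem sum_smul_vecMulVec_pairVec_apply (c : Sym2 ι → ℝ) (a b : ι) :
    (∑ z, c z • vecMulVec (pairVec z) (pairVec z)) a b = ∑ z with a ∈ z ∧ b ∈ z, c z := by
  simp only [Matrix.sum_apply, Matrix.smul_apply, vecMulVec_apply, pairVec, sum_filter]
  refine sum_congr rfl fun z _ => ?_
  split_ifs <;> simp_all

theorem sum_filter_mem_sym2 {M : Type*} [AddCommMonoid M] (a : ι) (f : Sym2 ι → M) :
    ∑ z with a ∈ z, f z = ∑ m, f s(a, m) := by
  refine Eq.trans ?_ (sum_map univ (Sym2.mkEmbedding a) f)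
  refine sum_congr ?_ fun _ _ => rfl
  ext z
  simp [Sym2.mem_iff_exists, eq_comm]

theorem isRankOneExpansion_pairCoeff : IsRankOneExpansion (pairCoeff (ι := ι)) pairVec := by
  intro H hH
  ext a b
  rw [sum_smul_vecMulVec_pairVec_apply]
  rcases eq_or_ne a b with rfl | hab
  · simp only [and_self, sum_filter_mem_sym2, pairCoeff_mk_apply, sum_add_distrib, sum_ite_eq,
      mem_univ, if_true, symEntry_apply]
    ring
  · have hpair (z : Sym2 ι) : a ∈ z ∧ b ∈ z ↔ z = s(a, b) := Sym2.mem_and_mem_iff hab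
    simp only [hpair, filter_eq', mem_univ, if_true, sum_singleton, pairCoeff_mk_apply,
      if_neg hab, symEntry_apply, hH.apply]
    ring

variable (ι) in
def refMatrix : Matrix ι ι ℝ := ((Fintype.card ι : ℝ) + 1) • 1 + vecMulVec 1 1

theorem refMatrix_apply (j k : ι) :
    refMatrix ι j k = (if j = k then (Fintype.card ι : ℝ) + 1 else 0) + 1 := by
  simp [refMatrix, one_apply]

theorem refMatrix_posDef : (refMatrix ι).PosDef := by
  have h := posSemidef_vecMulVec_self_star (1 : ι → ℝ)
  rw [star_trivial] at h
  exact (PosDef.one.smul (by positivity)).add_posSemidef h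

theorem pairCoeff_refMatrix_pos (z : Sym2 ι) : 0 < pairCoeff z (refMatrix ι) := by
  induction z using Sym2.ind with
  | h j k =>
    rcases eq_or_ne j k with rfl | hjk
    · have hdiag : symEntry j j (refMatrix ι) = Fintype.card ι + 2 := by
        simp only [symEntry_apply, refMatrix_apply, if_true]
        ring
      have hrow : ∑ m, symEntry j m (refMatrix ι) = 2 * Fintype.card ι + 1 := by
        simp only [symEntry_apply, refMatrix_apply, ← sum_div, sum_add_distrib, sum_ite_eq,
          sum_ite_eq', mem_univ, if_true, sum_const, card_univ, nsmul_eq_mul, mul_one]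
        ring
      rw [pairCoeff_mk_apply, if_pos rfl, hdiag, hrow]
      linarith
    · simp [pairCoeff_mk_apply, refMatrix_apply, hjk, hjk.symm]

end Pairs

theorem exists_unit_rankOneExpansion_pos {ι : Type*} [Fintype ι] [DecidableEq ι]
    {G₀ : Matrix ι ι ℝ} (hG₀ : G₀.PosDef) :
    ∃ (ξ : Sym2 ι → ι → ℝ) (L : Sym2 ι → Matrix ι ι ℝ →ₗ[ℝ] ℝ),
      (∀ z, ξ z ⬝ᵥ ξ z = 1) ∧ IsRankOneExpansion L ξ ∧ ∀ z, 0 < L z G₀ := by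
  obtain ⟨A, hA, hAG₀⟩ := hG₀.exists_isUnit_mul_mul_transpose_eq (refMatrix_posDef (ι := ι))
  set v : Sym2 ι → ι → ℝ := fun z => A *ᵥ pairVec z
  have hv (z : Sym2 ι) : v z ≠ 0 := by
    simpa using (mulVec_injective_iff_isUnit.2 hA).ne (pairVec_ne_zero z)
  have hc (z : Sym2 ι) : 0 < √(v z ⬝ᵥ v z) := Real.sqrt_pos.2 (dotProduct_self_pos (hv z))
  have hA' : IsUnit A.det := (isUnit_iff_isUnit_det A).1 hA
  have hG₀ref : A⁻¹ * G₀ * A⁻¹ᵀ = refMatrix ι := by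
    rw [← hAG₀, transpose_nonsing_inv, Matrix.mul_assoc, Matrix.mul_assoc, Matrix.mul_assoc,
      mul_nonsing_inv _ ((isUnit_det_transpose A) hA'), Matrix.mul_one,
      nonsing_inv_mul_cancel_left _ _ hA']
  refine ⟨fun z => (√(v z ⬝ᵥ v z))⁻¹ • v z,
    fun z => √(v z ⬝ᵥ v z) ^ 2 • (pairCoeff z ∘ₗ LinearMap.mulLeftRight ℝ (A⁻¹, A⁻¹ᵀ)),
    fun z => dotProduct_inv_sqrt_smul_self (hv z),
    (isRankOneExpansion_pairCoeff.congruence hA).rescale fun z => (hc z).ne', fun z => ?_⟩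
  rw [LinearMap.smul_apply, LinearMap.comp_apply, LinearMap.mulLeftRight_apply, hG₀ref]
  exact mul_pos (pow_pos (hc z) 2) (pairCoeff_refMatrix_pos z)

end NashDecomposition

end

theorem stmt2_general (n : ℕ) (G₀ : Matrix (Fin n) (Fin n) ℝ)
    (hpos : G₀.PosDef) :
    ∃ (r : ℝ), 0 < r ∧
    ∃ (ξ : Fin (n * (n + 1) / 2) → (Fin n → ℝ))
      (L : Fin (n * (n + 1) / 2) → (Matrix (Fin n) (Fin n) ℝ →ₗ[ℝ] ℝ)),
      (∀ i, (ξ i) ⬝ᵥ (ξ i) = 1) ∧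
      (∀ G : Matrix (Fin n) (Fin n) ℝ, G.IsSymm →
        G = ∑ i, L i G • vecMulVec (ξ i) (ξ i)) ∧
      (∀ G : Matrix (Fin n) (Fin n) ℝ, G.IsSymm →
        (∀ j k, |G j k - G₀ j k| ≤ r) → ∀ i, r ≤ L i G) := by
  obtain ⟨ξ, L, hξ, hL, hL₀⟩ := NashDecomposition.exists_unit_rankOneExpansion_pos hpos
  have hcard : Fintype.card (Sym2 (Fin n)) = n * (n + 1) / 2 := by
    rw [Sym2.card, Fintype.card_fin, Nat.choose_two_right, Nat.add_sub_cancel, mul_comm]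
  let e := (Fintype.equivFinOfCardEq hcard).symm
  obtain ⟨r, hr, hrL⟩ := exists_pos_forall_le_of_abs_sub_le (fun i => L (e i)) fun i => hL₀ (e i)
  exact ⟨r, hr, ξ ∘ e, L ∘ e, fun i => hξ (e i), hL.comp_equiv e, fun G _ => hrL G⟩

/-- Nash's decomposition of metrics near `G₀` into `n(n+1)/2` primitive metrics. -/
theorem stmt2 (n : ℕ) (hn : 0 < n) (G₀ : Matrix (Fin n) (Fin n) ℝ)
    (hsymm : G₀.IsSymm) (hpos : G₀.PosDef) :
    ∃ (r : ℝ), 0 < r ∧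
    ∃ (ξ : Fin (n * (n + 1) / 2) → (Fin n → ℝ))
      (L : Fin (n * (n + 1) / 2) → (Matrix (Fin n) (Fin n) ℝ →ₗ[ℝ] ℝ)),
      (∀ i, (ξ i) ⬝ᵥ (ξ i) = 1) ∧
      (∀ G : Matrix (Fin n) (Fin n) ℝ, G.IsSymm →
        G = ∑ i, L i G • vecMulVec (ξ i) (ξ i)) ∧
      (∀ G : Matrix (Fin n) (Fin n) ℝ, G.IsSymm →
        (∀ j k, |G j k - G₀ j k| ≤ r) → ∀ i, r ≤ L i G) :=
  stmt2_general n G₀ hpos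
end

section
/- Corrugation existence (Kuiper): there exists δ* > 0 and a smooth function Γ = (Γ₁,Γ₂): [0,δ*] × ℝ → ℝ², 2π-periodic in the second variable, satisfying the differential identity (1 + ∂_tΓ₁(s,t))² + (∂_tΓ₂(s,t))² = 1 + s² for all (s,t), together with bounds |∂_t^kΓ₁(s,·)| ≤ C(k)s², |∂_t^kΓ₂(s,·)| ≤ C(k)s, |∂_s∂_t^kΓ₁(s,·)| ≤ C(k)s, |∂_s∂_t^kΓ₂(s,·)| ≤ C(k) for each k ∈ ℕ. -/
open Real Set

noncomputable section

def mm (s : ℝ) : ℝ := Real.sqrt (1 + s^2)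
def DD (s : ℝ) : ℝ := 2 * mm s / (mm s + 1)
def rho (s : ℝ) : ℝ := Real.sqrt ((3 * mm s + 1) / (mm s + 1)^3)
def rr (s : ℝ) : ℝ := s * rho s
def G1 (s t : ℝ) : ℝ :=
  (mm s + 1) * Real.arctan ((DD s - 1) * Real.sin t * Real.cos t /
    (Real.cos t ^ 2 + DD s * Real.sin t ^ 2))
def G2 (s t : ℝ) : ℝ :=
  (mm s / DD s) * (Real.log (DD s - rr s * Real.cos t) - Real.log (DD s + rr s * Real.cos t))

lemma mm_sq (s : ℝ) : mm s ^ 2 = 1 + s ^ 2 :=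
  Real.sq_sqrt (by positivity)

lemma one_le_mm (s : ℝ) : 1 ≤ mm s := by
  have hn : 0 ≤ mm s := Real.sqrt_nonneg _
  nlinarith [mm_sq s, hn, sq_nonneg s]

lemma mm_pos (s : ℝ) : 0 < mm s := lt_of_lt_of_le one_pos (one_le_mm s)

lemma one_le_DD (s : ℝ) : 1 ≤ DD s := by
  rw [DD, le_div_iff₀ (by linarith [one_le_mm s])]
  linarith [one_le_mm s]

lemma rho_sq (s : ℝ) : rho s ^ 2 = (3 * mm s + 1) / (mm s + 1)^3 := by
  rw [rho]
  refine Real.sq_sqrt (le_of_lt ?_)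
  have := one_le_mm s
  apply div_pos
  · nlinarith
  · exact pow_pos (by linarith) 3

lemma rr_sq (s : ℝ) : rr s ^ 2 = DD s ^ 2 - 1 := by
  have h1 := one_le_mm s
  have h2 := mm_sq s
  rw [rr, DD, mul_pow, rho_sq, div_pow]
  have hne : mm s + 1 ≠ 0 := by linarith
  field_simp
  linear_combination (-(3*mm s+1)) * h2

lemma vpos (s t : ℝ) : 0 < Real.cos t ^ 2 + DD s * Real.sin t ^ 2 := by
  nlinarith [Real.sin_sq_add_cos_sq t, one_le_DD s, sq_nonneg (Real.sin t), sq_nonneg (Real.cos t)]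

lemma log_arg_pos (s t : ℝ) : 0 < DD s - rr s * Real.cos t ∧ 0 < DD s + rr s * Real.cos t := by
  have h1 : (rr s * Real.cos t)^2 < DD s ^ 2 := by
    have h3 := rr_sq s
    have h4 := one_le_DD s
    nlinarith [Real.cos_sq_le_one t, sq_nonneg (rr s), Real.sin_sq_add_cos_sq t,
      mul_pow (rr s) (Real.cos t) 2]
  have h2 : 0 < DD s := by linarith [one_le_DD s]
  constructor <;> nlinarith [h1, h2, sq_nonneg (DD s - rr s * Real.cos t), sq_nonneg (DD s + rr s * Real.cos t)]

lemma contDiff_mm : ContDiff ℝ (⊤ : ℕ∞) mm :=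
  (contDiff_const.add (contDiff_id.pow 2)).sqrt (fun s => by nlinarith [sq_nonneg s])

lemma mm_add_one_ne (s : ℝ) : mm s + 1 ≠ 0 := by linarith [one_le_mm s]

lemma contDiff_DD : ContDiff ℝ (⊤ : ℕ∞) DD :=
  (contDiff_const.mul contDiff_mm).div (contDiff_mm.add contDiff_const) mm_add_one_ne

lemma contDiff_rho : ContDiff ℝ (⊤ : ℕ∞) rho := by
  refine ContDiff.sqrt ?_ ?_
  · exact ((contDiff_const.mul contDiff_mm).add contDiff_const).div
      ((contDiff_mm.add contDiff_const).pow 3) (fun s => pow_ne_zero 3 (mm_add_one_ne s))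
  · intro s
    have := one_le_mm s
    have h1 : (0:ℝ) < (3 * mm s + 1) / (mm s + 1)^3 := by
      apply div_pos
      · nlinarith
      · exact pow_pos (by linarith) 3
    exact ne_of_gt h1

lemma contDiff_rr : ContDiff ℝ (⊤ : ℕ∞) rr := contDiff_id.mul contDiff_rho

lemma contDiff_G1 : ContDiff ℝ (⊤ : ℕ∞) (fun p : ℝ × ℝ => G1 p.1 p.2) := by
  unfold G1
  refine ContDiff.mul ((contDiff_mm.comp contDiff_fst).add contDiff_const) ?_
  refine Real.contDiff_arctan.comp ?_
  refine ContDiff.div ?_ ?_ (fun p => ne_of_gt (vpos p.1 p.2))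
  · exact (((contDiff_DD.comp contDiff_fst).sub contDiff_const).mul
      (Real.contDiff_sin.comp contDiff_snd)).mul (Real.contDiff_cos.comp contDiff_snd)
  · exact ((Real.contDiff_cos.comp contDiff_snd).pow 2).add
      ((contDiff_DD.comp contDiff_fst).mul ((Real.contDiff_sin.comp contDiff_snd).pow 2))

lemma contDiff_G2 : ContDiff ℝ (⊤ : ℕ∞) (fun p : ℝ × ℝ => G2 p.1 p.2) := by
  unfold G2
  refine ContDiff.mul ((contDiff_mm.comp contDiff_fst).div (contDiff_DD.comp contDiff_fst)
    (fun p => by linarith [one_le_DD p.1])) ?_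
  rw [contDiff_iff_contDiffAt]
  intro p
  refine ContDiffAt.sub (ContDiffAt.log ?_ (ne_of_gt (log_arg_pos p.1 p.2).1))
    (ContDiffAt.log ?_ (ne_of_gt (log_arg_pos p.1 p.2).2))
  · exact (((contDiff_DD.comp contDiff_fst).sub ((contDiff_rr.comp contDiff_fst).mul
      (Real.contDiff_cos.comp contDiff_snd))).contDiffAt)
  · exact (((contDiff_DD.comp contDiff_fst).add ((contDiff_rr.comp contDiff_fst).mul
      (Real.contDiff_cos.comp contDiff_snd))).contDiffAt)

lemma hDm (s : ℝ) : DD s * (mm s + 1) = 2 * mm s := by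
  rw [DD]; field_simp [mm_add_one_ne s]

lemma hasDerivAt_G1 (s t : ℝ) :
    HasDerivAt (fun t' => G1 s t')
      (mm s * (1 - rr s ^ 2 * Real.sin t ^ 2) / (1 + rr s ^ 2 * Real.sin t ^ 2) - 1) t := by
  have hσc := Real.sin_sq_add_cos_sq t
  have hv0 := vpos s t
  have hDD := one_le_DD s
  have hr2 := rr_sq s
  have hW0 : (0:ℝ) < 1 + rr s ^ 2 * Real.sin t ^ 2 := by positivity
  have hV : (1:ℝ) + rr s ^ 2 * Real.sin t ^ 2
      = Real.cos t ^ 2 + DD s ^ 2 * Real.sin t ^ 2 := by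
    rw [hr2]; linear_combination -hσc
  set U : ℝ := (DD s - 1) * Real.sin t * Real.cos t with hU
  set U' : ℝ := (DD s - 1) * Real.cos t ^ 2 - (DD s - 1) * Real.sin t ^ 2 with hU'
  set V : ℝ := Real.cos t ^ 2 + DD s * Real.sin t ^ 2 with hVdef
  set V' : ℝ := 2 * (DD s - 1) * Real.sin t * Real.cos t with hV'
  have hu : HasDerivAt (fun t' => (DD s - 1) * Real.sin t' * Real.cos t') U' t := by
    have h := ((Real.hasDerivAt_sin t).const_mul (DD s - 1)).mul (Real.hasDerivAt_cos t)
    refine h.congr_deriv ?_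
    rw [hU']; ring
  have hv : HasDerivAt (fun t' => Real.cos t' ^ 2 + DD s * Real.sin t' ^ 2) V' t := by
    have h := ((Real.hasDerivAt_cos t).pow 2).add
      (((Real.hasDerivAt_sin t).pow 2).const_mul (DD s))
    refine h.congr_deriv ?_
    rw [hV']; push_cast; ring
  have hq := hu.div hv (ne_of_gt hv0)
  have harc := (Real.hasDerivAt_arctan (U / V)).comp t hq
  have hfin := harc.const_mul (mm s + 1)
  have hfun : (fun t' => (mm s + 1) * (Real.arctan ∘ fun t' =>
      (DD s - 1) * Real.sin t' * Real.cos t' / (Real.cos t' ^ 2 + DD s * Real.sin t' ^ 2)) t')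
      = fun t' => G1 s t' := by
    funext t'; simp [G1, Function.comp]
  change HasDerivAt (fun t' => G1 s t') _ t at hfin
  convert hfin using 1
  -- value equality
  have hUV : (0:ℝ) < U ^ 2 + V ^ 2 := by nlinarith [sq_nonneg U]
  have hstep : 1 / (1 + (U / V) ^ 2) * ((U' * V - U * V') / V ^ 2)
      = (U' * V - U * V') / (U ^ 2 + V ^ 2) := by
    have h : 1 + (U / V) ^ 2 = (U ^ 2 + V ^ 2) / V ^ 2 := by
      field_simp
      ring
    rw [h, one_div_div, div_mul_div_comm, div_eq_div_iff (by positivity) (ne_of_gt hUV)]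
    ring
  have hcore : (U' * V - U * V') * (Real.cos t ^ 2 + DD s ^ 2 * Real.sin t ^ 2)
      = (DD s - (Real.cos t ^ 2 + DD s ^ 2 * Real.sin t ^ 2)) * (U ^ 2 + V ^ 2) := by
    rw [hU, hU', hVdef, hV']
    linear_combination (Real.sin t ^ 4 * DD s ^ 3 + Real.cos t ^ 2 * Real.sin t ^ 2 * DD s
      + Real.cos t ^ 2 * Real.sin t ^ 2 * DD s ^ 3 + Real.cos t ^ 4 * DD s) * hσc
  have hstep2 : (U' * V - U * V') / (U ^ 2 + V ^ 2)
      = (DD s - (1 + rr s ^ 2 * Real.sin t ^ 2)) / (1 + rr s ^ 2 * Real.sin t ^ 2) := by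
    rw [hV, div_eq_div_iff (ne_of_gt hUV) (by rw [← hV]; exact ne_of_gt hW0)]
    linear_combination hcore
  rw [hstep, hstep2]
  field_simp
  linear_combination -hDm s

lemma hasDerivAt_G2 (s t : ℝ) :
    HasDerivAt (fun t' => G2 s t')
      (2 * mm s * rr s * Real.sin t / (1 + rr s ^ 2 * Real.sin t ^ 2)) t := by
  have hσc := Real.sin_sq_add_cos_sq t
  have hr2 := rr_sq s
  have hD1 : (0:ℝ) < DD s := lt_of_lt_of_le one_pos (one_le_DD s)
  have hp1 := fun t' => (log_arg_pos s t').1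
  have hp2 := fun t' => (log_arg_pos s t').2
  have hW0 : (0:ℝ) < 1 + rr s ^ 2 * Real.sin t ^ 2 := by positivity
  have h1 : HasDerivAt (fun t' => Real.log (DD s - rr s * Real.cos t'))
      (rr s * Real.sin t / (DD s - rr s * Real.cos t)) t := by
    have hin : HasDerivAt (fun t' => DD s - rr s * Real.cos t') (rr s * Real.sin t) t := by
      have h := HasDerivAt.const_sub (DD s) ((Real.hasDerivAt_cos t).const_mul (rr s))
      refine h.congr_deriv ?_
      ring
    exact hin.log (ne_of_gt (hp1 t))
  have h2 : HasDerivAt (fun t' => Real.log (DD s + rr s * Real.cos t'))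
      (-(rr s * Real.sin t) / (DD s + rr s * Real.cos t)) t := by
    have hin : HasDerivAt (fun t' => DD s + rr s * Real.cos t') (-(rr s * Real.sin t)) t := by
      have h := HasDerivAt.const_add (DD s) ((Real.hasDerivAt_cos t).const_mul (rr s))
      refine h.congr_deriv ?_
      ring
    exact hin.log (ne_of_gt (hp2 t))
  have hfin := (h1.sub h2).const_mul (mm s / DD s)
  have hfun : (fun t' => (mm s / DD s) * (Real.log (DD s - rr s * Real.cos t')
      - Real.log (DD s + rr s * Real.cos t'))) = fun t' => G2 s t' := by
    funext t'; simp [G2]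
  change HasDerivAt (fun t' => G2 s t') _ t at hfin
  convert hfin using 1
  rw [div_sub_div _ _ (ne_of_gt (hp1 t)) (ne_of_gt (hp2 t))]
  rw [div_mul_div_comm]
  rw [div_eq_div_iff (ne_of_gt hW0) (ne_of_gt (mul_pos hD1 (mul_pos (hp1 t) (hp2 t))))]
  linear_combination (-2 * mm s * rr s * Real.sin t * Real.cos t ^ 2 * DD s
      + -2 * mm s * rr s * Real.sin t ^ 3 * DD s) * hr2
    + (2 * mm s * rr s * Real.sin t * DD s
      + -2 * mm s * rr s * Real.sin t * DD s ^ 3) * hσc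

lemma main_identity (s t : ℝ) :
    (1 + deriv (fun t' => G1 s t') t) ^ 2 + (deriv (fun t' => G2 s t') t) ^ 2 = 1 + s ^ 2 := by
  rw [(hasDerivAt_G1 s t).deriv, (hasDerivAt_G2 s t).deriv]
  have hm2 := mm_sq s
  have hW0 : (0:ℝ) < 1 + rr s ^ 2 * Real.sin t ^ 2 := by positivity
  field_simp
  linear_combination ((1 + rr s ^ 2 * Real.sin t ^ 2) ^ 2) * hm2

lemma per_G1 (s t : ℝ) : G1 s (t + 2 * π) = G1 s t := by
  simp [G1, Real.sin_add_two_pi, Real.cos_add_two_pi]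

lemma per_G2 (s t : ℝ) : G2 s (t + 2 * π) = G2 s t := by
  simp [G2, Real.cos_add_two_pi]

lemma G1_zero (t : ℝ) : G1 0 t = 0 := by
  have hD : DD 0 = 1 := by
    have h : mm 0 = 1 := by simp [mm, Real.sqrt_one]
    rw [DD, h]; norm_num
  simp [G1, hD]

lemma G2_zero (t : ℝ) : G2 0 t = 0 := by
  simp [G2, rr]

/-! ### partial derivative machinery -/

def Dt (F : ℝ × ℝ → ℝ) : ℝ × ℝ → ℝ := fun p => fderiv ℝ F p (0, 1)
def Ds (F : ℝ × ℝ → ℝ) : ℝ × ℝ → ℝ := fun p => fderiv ℝ F p (1, 0)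

lemma contDiff_Dt {F : ℝ × ℝ → ℝ} (hF : ContDiff ℝ (⊤ : ℕ∞) F) : ContDiff ℝ (⊤ : ℕ∞) (Dt F) :=
  (hF.fderiv_right (by simp)).clm_apply contDiff_const

lemma contDiff_Ds {F : ℝ × ℝ → ℝ} (hF : ContDiff ℝ (⊤ : ℕ∞) F) : ContDiff ℝ (⊤ : ℕ∞) (Ds F) :=
  (hF.fderiv_right (by simp)).clm_apply contDiff_const

lemma contDiff_Dt_iter {F : ℝ × ℝ → ℝ} (hF : ContDiff ℝ (⊤ : ℕ∞) F) (k : ℕ) :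
    ContDiff ℝ (⊤ : ℕ∞) (Dt^[k] F) := by
  induction k generalizing F with
  | zero => exact hF
  | succ k ih =>
    rw [Function.iterate_succ_apply]
    exact ih (contDiff_Dt hF)

lemma sect_t {F : ℝ × ℝ → ℝ} (hF : ContDiff ℝ (⊤ : ℕ∞) F) (s t : ℝ) :
    HasDerivAt (fun t' => F (s, t')) (Dt F (s, t)) t := by
  have h1 : HasDerivAt (fun t' : ℝ => ((s, t') : ℝ × ℝ)) ((0, 1) : ℝ × ℝ) t :=
    (hasDerivAt_const t s).prodMk (hasDerivAt_id t)
  have h2 := (hF.differentiable (by simp) (s, t)).hasFDerivAt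
  exact h2.comp_hasDerivAt t h1

lemma sect_s {F : ℝ × ℝ → ℝ} (hF : ContDiff ℝ (⊤ : ℕ∞) F) (s t : ℝ) :
    HasDerivAt (fun s' => F (s', t)) (Ds F (s, t)) s := by
  have h1 : HasDerivAt (fun s' : ℝ => ((s', t) : ℝ × ℝ)) ((1, 0) : ℝ × ℝ) s :=
    (hasDerivAt_id s).prodMk (hasDerivAt_const s t)
  have h2 := (hF.differentiable (by simp) (s, t)).hasFDerivAt
  exact h2.comp_hasDerivAt s h1

lemma iter_eq {F : ℝ × ℝ → ℝ} (hF : ContDiff ℝ (⊤ : ℕ∞) F) (k : ℕ) (s t : ℝ) :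
    deriv^[k] (fun t' => F (s, t')) t = Dt^[k] F (s, t) := by
  induction k generalizing F with
  | zero => rfl
  | succ k ih =>
    rw [Function.iterate_succ_apply]
    have hderiv : deriv (fun t' => F (s, t')) = fun t' => Dt F (s, t') :=
      funext fun t' => (sect_t hF s t').deriv
    rw [hderiv]
    exact ih (contDiff_Dt hF)

lemma deriv_s_eq {F : ℝ × ℝ → ℝ} (hF : ContDiff ℝ (⊤ : ℕ∞) F) (k : ℕ) (s t : ℝ) :
    deriv (fun s' => deriv^[k] (fun t' => F (s', t')) t) s = Ds (Dt^[k] F) (s, t) := by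
  have h : (fun s' => deriv^[k] (fun t' => F (s', t')) t) = fun s' => Dt^[k] F (s', t) :=
    funext fun s' => iter_eq hF k s' t
  rw [h]
  exact (sect_s (contDiff_Dt_iter hF k) s t).deriv

lemma fderiv_translate {F : ℝ × ℝ → ℝ} (hF : ContDiff ℝ (⊤ : ℕ∞) F)
    (hper : ∀ p : ℝ × ℝ, F (p + (0, 2 * π)) = F p) (p : ℝ × ℝ) (v : ℝ × ℝ) :
    fderiv ℝ F (p + (0, 2 * π)) v = fderiv ℝ F p v := by
  have hT : HasFDerivAt (fun q : ℝ × ℝ => q + (0, 2 * π))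
      (ContinuousLinearMap.id ℝ (ℝ × ℝ)) p := (hasFDerivAt_id p).add_const _
  have hFp : HasFDerivAt F (fderiv ℝ F (p + (0, 2 * π))) (p + (0, 2 * π)) :=
    (hF.differentiable (by simp) _).hasFDerivAt
  have hcomp := hFp.comp p hT
  have heq : (F ∘ fun q : ℝ × ℝ => q + (0, 2 * π)) = F := funext hper
  rw [heq] at hcomp
  have := hcomp.fderiv
  rw [this]
  simp

lemma per_Dt {F : ℝ × ℝ → ℝ} (hF : ContDiff ℝ (⊤ : ℕ∞) F)
    (hper : ∀ s t, F (s, t + 2 * π) = F (s, t)) :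
    ∀ s t, Dt F (s, t + 2 * π) = Dt F (s, t) := by
  intro s t
  have h : ((s, t + 2 * π) : ℝ × ℝ) = (s, t) + (0, 2 * π) := by simp [Prod.ext_iff]
  rw [Dt, h]
  exact fderiv_translate hF (fun p => by
    have : p + ((0 : ℝ), 2 * π) = (p.1, p.2 + 2 * π) := by simp [Prod.ext_iff]
    rw [this]; exact hper p.1 p.2) (s, t) (0, 1)

lemma per_Ds {F : ℝ × ℝ → ℝ} (hF : ContDiff ℝ (⊤ : ℕ∞) F)
    (hper : ∀ s t, F (s, t + 2 * π) = F (s, t)) :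
    ∀ s t, Ds F (s, t + 2 * π) = Ds F (s, t) := by
  intro s t
  have h : ((s, t + 2 * π) : ℝ × ℝ) = (s, t) + (0, 2 * π) := by simp [Prod.ext_iff]
  rw [Ds, h]
  exact fderiv_translate hF (fun p => by
    have : p + ((0 : ℝ), 2 * π) = (p.1, p.2 + 2 * π) := by simp [Prod.ext_iff]
    rw [this]; exact hper p.1 p.2) (s, t) (1, 0)

lemma per_Dt_iter {F : ℝ × ℝ → ℝ} (hF : ContDiff ℝ (⊤ : ℕ∞) F)
    (hper : ∀ s t, F (s, t + 2 * π) = F (s, t)) (k : ℕ) :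
    ∀ s t, Dt^[k] F (s, t + 2 * π) = Dt^[k] F (s, t) := by
  induction k generalizing F with
  | zero => exact hper
  | succ k ih =>
    intro s t
    rw [Function.iterate_succ_apply]
    exact ih (contDiff_Dt hF) (per_Dt hF hper) s t

lemma vanish_Dt_iter {F : ℝ × ℝ → ℝ} (hF : ContDiff ℝ (⊤ : ℕ∞) F)
    (h0 : ∀ t, F (0, t) = 0) (k : ℕ) : ∀ t, Dt^[k] F (0, t) = 0 := by
  induction k generalizing F with
  | zero => exact h0
  | succ k ih =>
    intro t
    rw [Function.iterate_succ_apply]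
    refine ih (contDiff_Dt hF) (fun t' => ?_) t
    have h1 : Dt F (0, t') = deriv (fun t'' => F (0, t'')) t' := ((sect_t hF 0 t').deriv).symm
    have h2 : (fun t'' => F (0, t'')) = fun _ => (0 : ℝ) := funext h0
    rw [h1, h2, deriv_const]

lemma Ds_Dt_comm {F : ℝ × ℝ → ℝ} (hF : ContDiff ℝ (⊤ : ℕ∞) F) (p : ℝ × ℝ) :
    Ds (Dt F) p = Dt (Ds F) p := by
  have hdf : Differentiable ℝ (fderiv ℝ F) :=
    (hF.fderiv_right (m := (⊤ : ℕ∞)) (by simp)).differentiable (by simp)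
  have hsym := second_derivative_symmetric
    (f' := fderiv ℝ F) (f'' := fderiv ℝ (fderiv ℝ F) p) (x := p)
    (fun y => (hF.differentiable (by simp) y).hasFDerivAt)
    (hdf p).hasFDerivAt
  have key : ∀ v w : ℝ × ℝ, fderiv ℝ (fun q => fderiv ℝ F q v) p w
      = fderiv ℝ (fderiv ℝ F) p w v := by
    intro v w
    have h := fderiv_clm_apply (𝕜 := ℝ) (c := fderiv ℝ F) (u := fun _ => v)
      (hdf p) (differentiableAt_const v)
    rw [h]
    simp
  show fderiv ℝ (fun q => fderiv ℝ F q (0,1)) p (1,0)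
      = fderiv ℝ (fun q => fderiv ℝ F q (1,0)) p (0,1)
  rw [key (0,1) (1,0), key (1,0) (0,1)]
  exact hsym (1,0) (0,1)

lemma vanish_Ds_Dt_iter {F : ℝ × ℝ → ℝ} (hF : ContDiff ℝ (⊤ : ℕ∞) F)
    (h0 : ∀ t, F (0, t) = 0) (h1 : ∀ t, Ds F (0, t) = 0) (k : ℕ) :
    ∀ t, Ds (Dt^[k] F) (0, t) = 0 := by
  induction k generalizing F with
  | zero => exact h1
  | succ k ih =>
    intro t
    rw [Function.iterate_succ_apply]
    refine ih (contDiff_Dt hF) (fun t' => ?_) (fun t' => ?_) t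
    · have ha : Dt F (0, t') = deriv (fun t'' => F (0, t'')) t' := ((sect_t hF 0 t').deriv).symm
      have hb : (fun t'' => F (0, t'')) = fun _ => (0 : ℝ) := funext h0
      rw [ha, hb, deriv_const]
    · rw [Ds_Dt_comm hF]
      have ha : Dt (Ds F) (0, t') = deriv (fun t'' => Ds F (0, t'')) t' :=
        ((sect_t (contDiff_Ds hF) 0 t').deriv).symm
      have hb : (fun t'' => Ds F (0, t'')) = fun _ => (0 : ℝ) := funext h1
      rw [ha, hb, deriv_const]

/-! ### boundedness lemmas -/

lemma bounded_per {F : ℝ × ℝ → ℝ} (hF : Continuous F)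
    (hper : ∀ s t, F (s, t + 2 * π) = F (s, t)) :
    ∃ C : ℝ, 0 < C ∧ ∀ s ∈ Icc (0:ℝ) 1, ∀ t : ℝ, |F (s, t)| ≤ C := by
  obtain ⟨C, hC⟩ := (isCompact_Icc.prod isCompact_Icc :
      IsCompact (Icc (0:ℝ) 1 ×ˢ Icc (0:ℝ) (2 * π))).exists_bound_of_continuousOn
    hF.continuousOn
  refine ⟨max C 1, lt_of_lt_of_le one_pos (le_max_right _ _), ?_⟩
  intro s hs t
  have hp : Function.Periodic (fun t' => F (s, t')) (2 * π) := fun t' => hper s t'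
  obtain ⟨y, hy, hxy⟩ := hp.exists_mem_Ico₀ (by positivity) t
  have : F (s, t) = F (s, y) := hxy
  rw [this]
  calc |F (s, y)| ≤ C := hC (s, y) (mk_mem_prod hs ⟨hy.1, le_of_lt hy.2⟩)
    _ ≤ max C 1 := le_max_left _ _

lemma bound_linear {F : ℝ × ℝ → ℝ} (hF : ContDiff ℝ (⊤ : ℕ∞) F)
    (hper : ∀ s t, F (s, t + 2 * π) = F (s, t))
    (h0 : ∀ t, F (0, t) = 0) :
    ∃ C : ℝ, 0 < C ∧ ∀ s ∈ Icc (0:ℝ) 1, ∀ t : ℝ, |F (s, t)| ≤ C * s := by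
  obtain ⟨C, hC, hb⟩ := bounded_per ((contDiff_Ds hF).continuous) (per_Ds hF hper)
  refine ⟨C, hC, ?_⟩
  intro s hs t
  have key := norm_image_sub_le_of_norm_deriv_le_segment'
    (f := fun s' => F (s', t)) (f' := fun s' => Ds F (s', t)) (a := 0) (b := 1) (C := C)
    (fun x _ => (sect_s hF x t).hasDerivWithinAt)
    (fun x hx => hb x ⟨hx.1, le_of_lt hx.2⟩ t) s hs
  simpa [h0 t] using key

lemma bound_quadratic {F : ℝ × ℝ → ℝ} (hF : ContDiff ℝ (⊤ : ℕ∞) F)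
    (hper : ∀ s t, F (s, t + 2 * π) = F (s, t))
    (h0 : ∀ t, F (0, t) = 0) (h1 : ∀ t, Ds F (0, t) = 0) :
    ∃ C : ℝ, 0 < C ∧ ∀ s ∈ Icc (0:ℝ) 1, ∀ t : ℝ, |F (s, t)| ≤ C * s ^ 2 := by
  obtain ⟨C, hC, hb⟩ := bound_linear (contDiff_Ds hF) (per_Ds hF hper) h1
  refine ⟨C, hC, ?_⟩
  intro s hs t
  have key := norm_image_sub_le_of_norm_deriv_le_segment'
    (f := fun s' => F (s', t)) (f' := fun s' => Ds F (s', t)) (a := 0) (b := s) (C := C * s)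
    (fun x _ => (sect_s hF x t).hasDerivWithinAt)
    (fun x hx => by
      have h := hb x ⟨hx.1, le_trans (le_of_lt hx.2) hs.2⟩ t
      calc |Ds F (x, t)| ≤ C * x := h
        _ ≤ C * s := by nlinarith [hx.1, le_of_lt hx.2, hC]) s ⟨hs.1, le_refl s⟩
  have : C * s * (s - 0) = C * s ^ 2 := by ring
  rw [this] at key
  simpa [h0 t] using key

lemma hasDerivAt_mm_zero : HasDerivAt mm 0 0 := by
  have hinner : HasDerivAt (fun s : ℝ => 1 + s ^ 2) 0 0 := by
    have h := (hasDerivAt_pow 2 (0:ℝ)).const_add 1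
    refine h.congr_deriv ?_
    norm_num
  have hsq := Real.hasDerivAt_sqrt (show (1:ℝ) + 0 ^ 2 ≠ 0 by norm_num)
  have h := hsq.comp 0 hinner
  have : 1 / (2 * Real.sqrt (1 + 0 ^ 2)) * 0 = 0 := by ring
  rw [this] at h
  exact h

lemma hasDerivAt_DD_zero : HasDerivAt DD 0 0 := by
  have h := (hasDerivAt_mm_zero.const_mul 2).div (hasDerivAt_mm_zero.add_const 1)
    (mm_add_one_ne 0)
  refine h.congr_deriv ?_
  ring

lemma hasDerivAt_G1_s_zero (t : ℝ) : HasDerivAt (fun s' => G1 s' t) 0 0 := by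
  have hnum : HasDerivAt (fun s' => (DD s' - 1) * Real.sin t * Real.cos t)
      (0 * Real.sin t * Real.cos t) 0 :=
    ((hasDerivAt_DD_zero.sub_const 1).mul_const (Real.sin t)).mul_const (Real.cos t)
  have hden : HasDerivAt (fun s' => Real.cos t ^ 2 + DD s' * Real.sin t ^ 2)
      (0 * Real.sin t ^ 2) 0 :=
    (hasDerivAt_DD_zero.mul_const (Real.sin t ^ 2)).const_add (Real.cos t ^ 2)
  have hq := hnum.div hden (ne_of_gt (vpos 0 t))
  have harc := (Real.hasDerivAt_arctan _).comp 0 hq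
  have hprod := (hasDerivAt_mm_zero.add_const 1).mul harc
  have hfun : (fun s' => (mm s' + 1) * (Real.arctan ∘ fun s' =>
      (DD s' - 1) * Real.sin t * Real.cos t /
        (Real.cos t ^ 2 + DD s' * Real.sin t ^ 2)) s') = fun s' => G1 s' t := by
    funext s'; simp [G1, Function.comp]
  change HasDerivAt (fun s' => G1 s' t) _ 0 at hprod
  convert hprod using 1
  ring

lemma Ds_G1_zero (t : ℝ) : Ds (fun p : ℝ × ℝ => G1 p.1 p.2) (0, t) = 0 :=
  (sect_s contDiff_G1 0 t).unique (hasDerivAt_G1_s_zero t)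

end

/-- Existence of Kuiper's corrugation function `Γ = (Γ₁, Γ₂)`. -/
theorem stmt10 :
    ∃ δstar : ℝ, 0 < δstar ∧
    ∃ Γ₁ Γ₂ : ℝ → ℝ → ℝ,
      ContDiff ℝ (⊤ : ℕ∞) (fun p : ℝ × ℝ => Γ₁ p.1 p.2) ∧
      ContDiff ℝ (⊤ : ℕ∞) (fun p : ℝ × ℝ => Γ₂ p.1 p.2) ∧
      (∀ s t, Γ₁ s (t + 2 * π) = Γ₁ s t ∧ Γ₂ s (t + 2 * π) = Γ₂ s t) ∧
      (∀ s ∈ Icc (0 : ℝ) δstar, ∀ t,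
        (1 + deriv (Γ₁ s) t) ^ 2 + (deriv (Γ₂ s) t) ^ 2 = 1 + s ^ 2) ∧
      (∀ k : ℕ, ∃ C : ℝ, 0 < C ∧ ∀ s ∈ Icc (0 : ℝ) δstar, ∀ t : ℝ,
        |deriv^[k] (Γ₁ s) t| ≤ C * s ^ 2 ∧
        |deriv^[k] (Γ₂ s) t| ≤ C * s ∧
        |deriv (fun s' => deriv^[k] (Γ₁ s') t) s| ≤ C * s ∧
        |deriv (fun s' => deriv^[k] (Γ₂ s') t) s| ≤ C) := by
  refine ⟨1, one_pos, G1, G2, contDiff_G1, contDiff_G2, fun s t => ⟨per_G1 s t, per_G2 s t⟩,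
    fun s _ t => main_identity s t, fun k => ?_⟩
  set F1 : ℝ × ℝ → ℝ := fun p => G1 p.1 p.2 with hF1
  set F2 : ℝ × ℝ → ℝ := fun p => G2 p.1 p.2 with hF2
  have perF1 : ∀ s t, F1 (s, t + 2 * π) = F1 (s, t) := fun s t => per_G1 s t
  have perF2 : ∀ s t, F2 (s, t + 2 * π) = F2 (s, t) := fun s t => per_G2 s t
  have h0F1 : ∀ t, F1 (0, t) = 0 := G1_zero
  have h0F2 : ∀ t, F2 (0, t) = 0 := G2_zero
  obtain ⟨C1, hC1, hB1⟩ := bound_quadratic (contDiff_Dt_iter contDiff_G1 k)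
    (per_Dt_iter contDiff_G1 perF1 k) (vanish_Dt_iter contDiff_G1 h0F1 k)
    (vanish_Ds_Dt_iter contDiff_G1 h0F1 Ds_G1_zero k)
  obtain ⟨C2, hC2, hB2⟩ := bound_linear (contDiff_Dt_iter contDiff_G2 k)
    (per_Dt_iter contDiff_G2 perF2 k) (vanish_Dt_iter contDiff_G2 h0F2 k)
  obtain ⟨C3, hC3, hB3⟩ := bound_linear (contDiff_Ds (contDiff_Dt_iter contDiff_G1 k))
    (per_Ds (contDiff_Dt_iter contDiff_G1 k) (per_Dt_iter contDiff_G1 perF1 k))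
    (vanish_Ds_Dt_iter contDiff_G1 h0F1 Ds_G1_zero k)
  obtain ⟨C4, hC4, hB4⟩ := bounded_per (contDiff_Ds (contDiff_Dt_iter contDiff_G2 k)).continuous
    (per_Ds (contDiff_Dt_iter contDiff_G2 k) (per_Dt_iter contDiff_G2 perF2 k))
  refine ⟨max (max C1 C2) (max C3 C4), ?_, ?_⟩
  · exact lt_of_lt_of_le hC1 (le_trans (le_max_left _ _) (le_max_left _ _))
  intro s hs t
  have hs0 : 0 ≤ s := hs.1
  have e1 : deriv^[k] (G1 s) t = Dt^[k] F1 (s, t) := iter_eq contDiff_G1 k s t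
  have e2 : deriv^[k] (G2 s) t = Dt^[k] F2 (s, t) := iter_eq contDiff_G2 k s t
  have e3 : deriv (fun s' => deriv^[k] (G1 s') t) s = Ds (Dt^[k] F1) (s, t) :=
    deriv_s_eq contDiff_G1 k s t
  have e4 : deriv (fun s' => deriv^[k] (G2 s') t) s = Ds (Dt^[k] F2) (s, t) :=
    deriv_s_eq contDiff_G2 k s t
  refine ⟨?_, ?_, ?_, ?_⟩
  · rw [e1]
    calc |Dt^[k] F1 (s, t)| ≤ C1 * s ^ 2 := hB1 s hs t
      _ ≤ max (max C1 C2) (max C3 C4) * s ^ 2 := by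
        apply mul_le_mul_of_nonneg_right _ (sq_nonneg s)
        exact le_trans (le_max_left _ _) (le_max_left _ _)
  · rw [e2]
    calc |Dt^[k] F2 (s, t)| ≤ C2 * s := hB2 s hs t
      _ ≤ max (max C1 C2) (max C3 C4) * s := by
        apply mul_le_mul_of_nonneg_right _ hs0
        exact le_trans (le_max_right _ _) (le_max_left _ _)
  · rw [e3]
    calc |Ds (Dt^[k] F1) (s, t)| ≤ C3 * s := hB3 s hs t
      _ ≤ max (max C1 C2) (max C3 C4) * s := by
        apply mul_le_mul_of_nonneg_right _ hs0
        exact le_trans (le_max_left _ _) (le_max_right _ _)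
  · rw [e4]
    calc |Ds (Dt^[k] F2) (s, t)| ≤ C4 := hB4 s hs t
      _ ≤ max (max C1 C2) (max C3 C4) := le_trans (le_max_right _ _) (le_max_right _ _)
end
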